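/- Let Δ^¬φ := ∼(𝟏 ⧀ φ) ∧ ¬∼∼(𝟏 ⧀ φ). Then in every KG² model and every world w, for every formula φ of biL¬_{□,◇}: (v₁(Δ^¬φ,w), v₂(Δ^¬φ,w)) = (1,0) if (v₁(φ,w), v₂(φ,w)) = (1,0), and (v₁(Δ^¬φ,w), v₂(Δ^¬φ,w)) = (0,1) otherwise. -/

import Mathlib

/- Truth values: the real unit interval [0,1] with its complete lattice structure
   (so `sInf ∅ = 1` and `sSup ∅ = 0`). -/
instance : Fact ((0:ℝ) ≤ 1) := ⟨zero_le_one⟩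

abbrev TV : Type := unitInterval

/-- Gödel implication: `a →G b = 1` if `a ≤ b`, else `b`. -/
noncomputable def gimp (a b : TV) : TV := if a ≤ b then 1 else b

/-- Gödel coimplication: `a ⧀G b = 0` if `a ≤ b`, else `a`. -/
noncomputable def gcoimp (a b : TV) : TV := if a ≤ b then 0 else a

/-- Formulas of `biL¬_{□,◇}` over the countable variable set `ℕ`. -/
inductive Formula : Type
  | var : ℕ → Formula
  | neg : Formula → Formula
  | and : Formula → Formula → Formula
  | or : Formula → Formula → Formula
  | imp : Formula → Formula → Formula
  | coimp : Formula → Formula → Formula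
  | box : Formula → Formula
  | dia : Formula → Formula

/-- KG² valuation pair `(v₁, v₂)` on a crisp frame `(W, R)`:
`(kval R v φ w).1 = v₁(φ,w)` and `(kval R v φ w).2 = v₂(φ,w)`. -/
noncomputable def kval {W : Type} (R : W → W → Prop) (v : ℕ → W → TV × TV) :
    Formula → W → TV × TV
  | .var p, w => v p w
  | .neg φ, w => ((kval R v φ w).2, (kval R v φ w).1)
  | .and φ ψ, w => ((kval R v φ w).1 ⊓ (kval R v ψ w).1, (kval R v φ w).2 ⊔ (kval R v ψ w).2)
  | .or φ ψ, w => ((kval R v φ w).1 ⊔ (kval R v ψ w).1, (kval R v φ w).2 ⊓ (kval R v ψ w).2)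
  | .imp φ ψ, w =>
      (gimp (kval R v φ w).1 (kval R v ψ w).1, gcoimp (kval R v ψ w).2 (kval R v φ w).2)
  | .coimp φ ψ, w =>
      (gcoimp (kval R v φ w).1 (kval R v ψ w).1, gimp (kval R v ψ w).2 (kval R v φ w).2)
  | .box φ, w =>
      (sInf ((fun w' => (kval R v φ w').1) '' {w' | R w w'}),
       sSup ((fun w' => (kval R v φ w').2) '' {w' | R w w'}))
  | .dia φ, w =>
      (sSup ((fun w' => (kval R v φ w').1) '' {w' | R w w'}),
       sInf ((fun w' => (kval R v φ w').2) '' {w' | R w w'}))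

/-- `𝟏 := p → p`. -/
def fone : Formula := .imp (.var 0) (.var 0)

/-- `𝟎 := p ⧀ p`. -/
def fzero : Formula := .coimp (.var 0) (.var 0)

/-- Gödel negation `∼φ := φ → 𝟎`. -/
def fnegG (φ : Formula) : Formula := .imp φ fzero

/-- `Δ^¬φ := ∼(𝟏 ⧀ φ) ∧ ¬∼∼(𝟏 ⧀ φ)`. -/
def fDeltaNeg (φ : Formula) : Formula :=
  .and (fnegG (.coimp fone φ)) (.neg (fnegG (fnegG (.coimp fone φ))))

/-! The formula `𝟏 ⧀ φ` is crisp in each coordinate: `v₁` is `0` exactly when `v₁(φ) = 1`, and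
`v₂` is `1` exactly when `v₂(φ) = 0`. On such `{0,1}`-valued pairs the Gödel negation `∼` acts as
Boolean negation coordinatewise, so both coordinates of `Δ^¬φ` reduce to the test
`v₁(φ) = 1 ∧ v₂(φ) = 0`. -/

section CrispValues

variable {W : Type} (R : W → W → Prop) (v : ℕ → W → TV × TV) (w : W)

lemma gimp_zero_right (a : TV) : gimp a 0 = if a = 0 then 1 else 0 := by
  simp only [gimp, nonpos_iff_eq_zero]

lemma gcoimp_one_left (a : TV) : gcoimp 1 a = if a = 1 then 0 else 1 := by
  simp only [gcoimp, unitInterval.le_one'.ge_iff_eq', eq_comm]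

lemma kval_fone : kval R v fone w = (1, 0) := by
  simp [fone, kval, gimp, gcoimp]

lemma kval_fzero : kval R v fzero w = (0, 1) := by
  simp [fzero, kval, gimp, gcoimp]

def crispPair (p q : Prop) [Decidable p] [Decidable q] : TV × TV :=
  (if p then 1 else 0, if q then 1 else 0)

lemma kval_coimp_fone (φ : Formula) :
    kval R v (.coimp fone φ) w =
      crispPair ((kval R v φ w).1 ≠ 1) ((kval R v φ w).2 = 0) := by
  simp only [kval, kval_fone, gcoimp_one_left, gimp_zero_right, crispPair, ite_not]

lemma kval_fnegG_of_eq_crispPair {φ : Formula} {p q : Prop} [Decidable p] [Decidable q]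
    (h : kval R v φ w = crispPair p q) :
    kval R v (fnegG φ) w = crispPair (¬p) (¬q) := by
  simp only [fnegG, kval, kval_fzero, h, crispPair, gimp_zero_right, gcoimp_one_left]
  split_ifs <;> simp_all

lemma kval_fDeltaNeg (φ : Formula) :
    kval R v (fDeltaNeg φ) w = if kval R v φ w = (1, 0) then (1, 0) else (0, 1) := by
  have h₁ := kval_coimp_fone R v w φ
  have h₂ := kval_fnegG_of_eq_crispPair R v w h₁
  have h₃ := kval_fnegG_of_eq_crispPair R v w h₂
  simp only [fDeltaNeg, kval, h₂, h₃, crispPair, Prod.ext_iff]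
  split_ifs <;> simp_all

end CrispValues

theorem stmt15 {W : Type} (R : W → W → Prop) (v : ℕ → W → TV × TV)
    (φ : Formula) (w : W) :
    (kval R v φ w = (1, 0) → kval R v (fDeltaNeg φ) w = (1, 0)) ∧
    (kval R v φ w ≠ (1, 0) → kval R v (fDeltaNeg φ) w = (0, 1)) := by
  rw [kval_fDeltaNeg]
  exact ⟨fun h => if_pos h, fun h => if_neg h⟩
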